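/- arXiv:2506.12254 — 2 statements merged into one kernel-verified Lean document; each statement's English description precedes it below -/
import Mathlib

section
/- Let G be a finite weighted directed graph where every vertex has an outgoing edge, and let σ be a positional policy. If for every vertex v and every edge (v,u), the appraisal inequality (val^σ(u), w(v,u) − val^σ(u) + pot^σ(u)) ≤_lex (val^σ(σ(v)), w(v,σ(v)) − val^σ(σ(v)) + pot^σ(σ(v))) holds (lexicographic comparison), then σ attains the maximal mean-payoff value at every vertex among all positional policies. -/
/-!
The mean payoff is invariant under shifting the run, so `val (σ x) = val x`, and the first
component of the appraisal inequality says that `val` never increases along an edge of `τ`.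
As the graph is finite, the `τ`-run from `v` reaches a vertex `x` after which `val` stays equal
to `val x ≤ val v`. From then on the second component gives
`w(y, τ y) ≤ val x + pot y - pot (τ y)`; the potential telescopes, so the running averages of
the `τ`-run are at most `val x + O(1/t)`.
-/

/-- The mean-payoff value of the positional policy `σ` from vertex `v`:
the liminf of the running average weights along the run generated by `σ`
(which, for a lasso-shaped run, equals the mean weight of its cycle). -/
noncomputable def mpVal {V : Type*} (w : V → V → ℤ) (σ : V → V) (v : V) : ℝ :=
  Filter.liminf
    (fun t : ℕ => ((∑ i ∈ Finset.range t, w (σ^[i] v) (σ^[i + 1] v) : ℤ) : ℝ) / t)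
    Filter.atTop

open Filter Finset Topology

lemma liminf_add_of_tendsto_zero {ι : Type*} {l : Filter ι} [l.NeBot] {u v : ι → ℝ}
    (hu : IsBoundedUnder (· ≥ ·) l u) (hu' : IsCoboundedUnder (· ≥ ·) l u)
    (hv : Tendsto v l (𝓝 0)) :
    liminf (u + v) l = liminf u l := by
  have hv_le : IsBoundedUnder (· ≤ ·) l v := hv.isBoundedUnder_le
  have hv_ge : IsBoundedUnder (· ≥ ·) l v := hv.isBoundedUnder_ge
  rw [add_comm]
  apply le_antisymm
  · simpa [hv.limsup_eq] using liminf_add_le hv_ge hv_le hu hu'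
  · simpa [hv.liminf_eq] using le_liminf_add hv_ge hv_le hu hu'

noncomputable def cesaroMean (a : ℕ → ℝ) (t : ℕ) : ℝ :=
  (∑ i ∈ range t, a i) / t

section cesaroMean

variable {a : ℕ → ℝ}

lemma le_cesaroMean {m : ℝ} (ha : ∀ i, m ≤ a i) {t : ℕ} (ht : t ≠ 0) :
    m ≤ cesaroMean a t := by
  rw [cesaroMean, le_div_iff₀ (by positivity)]
  simpa [mul_comm] using card_nsmul_le_sum (range t) a m fun i _ => ha i

lemma abs_cesaroMean_le {M : ℝ} (ha : ∀ i, |a i| ≤ M) (t : ℕ) :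
    |cesaroMean a t| ≤ M := by
  rcases eq_or_ne t 0 with rfl | ht
  · simpa [cesaroMean] using (abs_nonneg _).trans (ha 0)
  rw [cesaroMean, abs_div, Nat.abs_cast, div_le_iff₀ (by positivity)]
  calc |∑ i ∈ range t, a i| ≤ ∑ i ∈ range t, |a i| := abs_sum_le_sum_abs _ _
    _ ≤ ∑ _i ∈ range t, M := sum_le_sum fun i _ => ha i
    _ = M * t := by simp [mul_comm]

lemma liminf_cesaroMean_comp_succ {M : ℝ} (ha : ∀ i, |a i| ≤ M) :
    liminf (cesaroMean fun i => a (i + 1)) atTop = liminf (cesaroMean a) atTop := by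
  have hbdd := abs_cesaroMean_le ha
  set e : ℕ → ℝ := fun t => (cesaroMean a (t + 1) - a 0) / t
  -- the Cesàro mean of the shifted sequence drops `a 0` and divides by `t` instead of `t + 1`
  have hshift : ∀ t ≠ 0, cesaroMean (fun i => a (i + 1)) t = cesaroMean a (t + 1) + e t := by
    intro t ht
    simp only [e, cesaroMean, sum_range_succ' a t]
    field_simp
    push_cast
    ring
  have he : Tendsto e atTop (𝓝 0) := by
    refine squeeze_zero_norm (fun t => ?_) (tendsto_const_div_atTop_nhds_zero_nat (2 * M))
    rw [Real.norm_eq_abs, abs_div, Nat.abs_cast]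
    gcongr
    linarith [abs_sub (cesaroMean a (t + 1)) (a 0), hbdd (t + 1), ha 0]
  calc liminf (cesaroMean fun i => a (i + 1)) atTop
      = liminf ((fun t => cesaroMean a (t + 1)) + e) atTop :=
        liminf_congr ((eventually_ne_atTop 0).mono hshift)
    _ = liminf (fun t => cesaroMean a (t + 1)) atTop :=
        liminf_add_of_tendsto_zero (isBoundedUnder_of ⟨-M, fun t => (abs_le.1 (hbdd _)).1⟩)
          (isCoboundedUnder_ge_of_le _ fun t => (abs_le.1 (hbdd _)).2) he
    _ = liminf (cesaroMean a) atTop := liminf_nat_add _ 1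

lemma liminf_cesaroMean_le_of_le_add_sub {f : ℕ → ℝ} {c m p : ℝ} (ha : ∀ i, m ≤ a i)
    (hf : ∀ i, p ≤ f i) (h : ∀ i, a i ≤ c + (f i - f (i + 1))) :
    liminf (cesaroMean a) atTop ≤ c := by
  set K := f 0 - p
  have hsum : ∀ t, ∑ i ∈ range t, a i ≤ t * c + K := fun t =>
    calc ∑ i ∈ range t, a i ≤ ∑ i ∈ range t, (c + (f i - f (i + 1))) := sum_le_sum fun i _ => h i
      _ = t * c + (f 0 - f t) := by rw [sum_add_distrib, sum_range_sub']; simp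
      _ ≤ t * c + K := by linarith [hf t]
  have hmean : ∀ᶠ t in atTop, cesaroMean a t ≤ c + K / t := by
    filter_upwards [eventually_ne_atTop 0] with t ht
    rw [cesaroMean, div_le_iff₀ (by positivity), add_mul, div_mul_cancel₀ _ (by positivity)]
    linarith [hsum t]
  have hlim : Tendsto (fun t : ℕ => c + K / t) atTop (𝓝 c) := by
    simpa using (tendsto_const_div_atTop_nhds_zero_nat K).const_add c
  calc liminf (cesaroMean a) atTop ≤ liminf (fun t : ℕ => c + K / t) atTop :=
        liminf_le_liminf hmean
          (isBoundedUnder_of_eventually_ge ((eventually_ne_atTop 0).mono fun t => le_cesaroMean ha))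
          hlim.isBoundedUnder_le.isCoboundedUnder_ge
    _ = c := hlim.liminf_eq

end cesaroMean

section mpVal

variable {V : Type*} (w : V → V → ℤ) (σ : V → V)

lemma mpVal_eq_liminf_cesaroMean (v : V) :
    mpVal w σ v = liminf (cesaroMean fun i => (w (σ^[i] v) (σ^[i + 1] v) : ℝ)) atTop := by
  simp only [mpVal, Int.cast_sum]
  rfl

lemma mpVal_apply_self [Finite V] (v : V) : mpVal w σ (σ v) = mpVal w σ v := by
  obtain ⟨M, hM⟩ := (Set.finite_range fun p : V × V => |(w p.1 p.2 : ℝ)|).bddAbove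
  rw [mpVal_eq_liminf_cesaroMean, mpVal_eq_liminf_cesaroMean]
  exact liminf_cesaroMean_comp_succ (a := fun i => (w (σ^[i] v) (σ^[i + 1] v) : ℝ))
    fun i => hM (Set.mem_range_self (_, _))

lemma mpVal_iterate_apply [Finite V] (n : ℕ) (v : V) : mpVal w σ (σ^[n] v) = mpVal w σ v := by
  induction n with
  | zero => rfl
  | succ n ih => rw [Function.iterate_succ_apply', mpVal_apply_self, ih]

lemma mpVal_le_of_weight_le_add_sub [Finite V] (v : V) (c : ℝ) (pot : V → ℝ)
    (h : ∀ i, (w (σ^[i] v) (σ^[i + 1] v) : ℝ) ≤ c + (pot (σ^[i] v) - pot (σ^[i + 1] v))) :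
    mpVal w σ v ≤ c := by
  obtain ⟨m, hm⟩ := (Set.finite_range fun p : V × V => (w p.1 p.2 : ℝ)).bddBelow
  obtain ⟨p, hp⟩ := (Set.finite_range pot).bddBelow
  rw [mpVal_eq_liminf_cesaroMean]
  exact liminf_cesaroMean_le_of_le_add_sub (fun i => hm (Set.mem_range_self (_, _)))
    (fun i => hp (Set.mem_range_self _)) h

end mpVal

lemma apply_iterate_le {α β : Type*} [Preorder β] {f : α → α} {g : α → β}
    (h : ∀ x, g (f x) ≤ g x) (n : ℕ) (x : α) : g (f^[n] x) ≤ g x := by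
  induction n with
  | zero => rfl
  | succ n ih => exact (Function.iterate_succ_apply' f n x ▸ h _).trans ih

theorem stmt_18_general {V : Type*} [Fintype V] (E : V → V → Prop) (w : V → V → ℤ)
    (σ : V → V)
    (val pot : V → ℝ)
    (hval : ∀ v, val v = mpVal w σ v)
    (hpot : ∀ v, pot v = (w v (σ v) : ℝ) - val v + pot (σ v))
    (himp : ∀ v u, E v u →
      val u < val (σ v) ∨
        (val u = val (σ v) ∧
          (w v u : ℝ) - val u + pot u ≤ (w v (σ v) : ℝ) - val (σ v) + pot (σ v))) :
    ∀ v, ∀ τ : V → V, (∀ x, E x (τ x)) → mpVal w τ v ≤ mpVal w σ v := by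
  intro v τ hτ
  have hval_σ : ∀ x, val (σ x) = val x := fun x => by rw [hval, hval, mpVal_apply_self]
  have hval_τ : ∀ x, val (τ x) ≤ val x := fun x => by
    rcases himp x (τ x) (hτ x) with h | h
    · linarith [hval_σ x]
    · linarith [hval_σ x, h.1]
  have hweight : ∀ x, val (τ x) = val x → (w x (τ x) : ℝ) ≤ val x + (pot x - pot (τ x)) := by
    intro x hx
    rcases himp x (τ x) (hτ x) with h | h
    · linarith [hval_σ x]
    · linarith [h.2, hpot x, hval_σ x]
  obtain ⟨_, ⟨N, rfl⟩, hmin⟩ := Set.exists_min_image (Set.range fun n => τ^[n] v) val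
    (Set.toFinite _) ⟨v, 0, rfl⟩
  set x := τ^[N] v
  have hconst : ∀ i, val (τ^[i] x) = val x := fun i =>
    (apply_iterate_le hval_τ i x).antisymm
      (hmin _ ⟨i + N, Function.iterate_add_apply τ i N v⟩)
  calc mpVal w τ v = mpVal w τ x := (mpVal_iterate_apply w τ N v).symm
    _ ≤ val x := mpVal_le_of_weight_le_add_sub w τ x (val x) pot fun i => by
        rw [Function.iterate_succ_apply', ← hconst i]
        exact hweight _ (by rw [← Function.iterate_succ_apply' τ i x, hconst, hconst])
    _ ≤ mpVal w σ v := hval v ▸ apply_iterate_le hval_τ N v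

/-- Correctness criterion for Howard's policy iteration on deterministic MDPs
with mean-payoff objectives: if a positional policy `σ` is a fixed point of the
Bellman operator, i.e. for every edge `(v, u)` the appraisal
`(val^σ(u), w(v,u) − val^σ(u) + pot^σ(u))` is lexicographically at most the
appraisal of the edge `(v, σ(v))` chosen by `σ`, then `σ` attains the maximal
mean-payoff value at every vertex among all positional policies.
Here `val` is the mean-payoff value of `σ` and `pot` is a potential function,
satisfying `pot(v) = w(v, σ(v)) − val(v) + pot(σ(v))` for every vertex `v`. -/
theorem stmt_18 {V : Type*} [Fintype V] (E : V → V → Prop) (w : V → V → ℤ)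
    (hE : ∀ v, ∃ u, E v u) (σ : V → V) (hσ : ∀ v, E v (σ v))
    (val pot : V → ℝ)
    (hval : ∀ v, val v = mpVal w σ v)
    (hpot : ∀ v, pot v = (w v (σ v) : ℝ) - val v + pot (σ v))
    (himp : ∀ v u, E v u →
      val u < val (σ v) ∨
        (val u = val (σ v) ∧
          (w v u : ℝ) - val u + pot u ≤ (w v (σ v) : ℝ) - val (σ v) + pot (σ v))) :
    ∀ v, ∀ τ : V → V, (∀ x, E x (τ x)) → mpVal w τ v ≤ mpVal w σ v :=
  stmt_18_general E w σ val pot hval hpot himp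
end

section
/- In the DMDP P_n with n ≥ 1, for the policy π_i (1 ≤ i ≤ n) defined by π_i(t_k) = b_k for k ≤ i−2, π_i(t_{i−1}) = t_{i−1}, π_i(t_i) = t_i, and π_i(v) = t_i for all other vertices v, the mean-payoff satisfies val^{π_i}(t_{i−1}) = n(n+1)+(i−1) and val^{π_i}(v) = n(n+1)+i for all v ≠ t_{i−1}, and the potentials are pot^{π_i}(t_{i−1}) = pot^{π_i}(t_i) = 0, pot^{π_i}(t_k) = (n+1)² − 2(n(n+1)+i) for k ≤ i−2, and pot^{π_i}(v) = −(n(n+1)+i) for all b-vertices and all t_k with k > i. -/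
/-- Vertices of `P_n`: `(false, k)` is `b_k` and `(true, k)` is `t_k`,
with the relevant indices `k ∈ {1, …, n}`. -/
abbrev DmdpVertex : Type := Bool × ℕ

/-- Weight function of `P_n`: edges into `b`-vertices have weight `(n+1)²`,
edges from any vertex to a different `t`-vertex have weight `0`, and the
self-loop at `t_j` has weight `n(n+1) + j`. -/
def dmdpWeight (n : ℕ) : DmdpVertex → DmdpVertex → ℚ
  | (false, _), (false, _) => ((n : ℚ) + 1) ^ 2
  | (true, _), (false, _) => ((n : ℚ) + 1) ^ 2
  | (false, _), (true, _) => 0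
  | (true, k), (true, j) => if k = j then (n : ℚ) * (n + 1) + j else 0

/-- The policy `π_i`: `π_i(t_k) = b_k` for `k ≤ i − 2`,
`π_i(t_{i−1}) = t_{i−1}`, `π_i(t_i) = t_i`, and `π_i(v) = t_i` otherwise. -/
def dmdpPi (i : ℕ) : DmdpVertex → DmdpVertex
  | (true, k) =>
      if k ≤ i - 2 then (false, k)
      else if k = i - 1 ∨ k = i then (true, k)
      else (true, i)
  | (false, _) => (true, i)

/-- Mean-payoff values and potentials of the policy `π_i` on `P_n`.
The functions `val` and `pot` are characterized by: `val` is constant along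
the run, `val v` equals the self-loop weight at the self-loop vertex the run
reaches, `pot` vanishes at self-loop vertices (the heads of the cycles), and
`pot` satisfies the recurrence `pot v = w(v, π_i(v)) − val v + pot(π_i(v))`
elsewhere.  Then `val^{π_i}(t_{i−1}) = n(n+1)+(i−1)`, `val^{π_i}(v) = n(n+1)+i`
for all other vertices `v`, `pot^{π_i}(t_{i−1}) = pot^{π_i}(t_i) = 0`,
`pot^{π_i}(t_k) = (n+1)² − 2(n(n+1)+i)` for `k ≤ i−2`, and
`pot^{π_i}(v) = −(n(n+1)+i)` for all `b`-vertices and all `t_k` with `k > i`. -/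
theorem stmt_19 (n i : ℕ) (hn : 1 ≤ n) (hi1 : 1 ≤ i) (hin : i ≤ n)
    (val pot : DmdpVertex → ℚ)
    (hval_loop : ∀ v, dmdpPi i v = v → val v = dmdpWeight n v v)
    (hval_step : ∀ v, val v = val (dmdpPi i v))
    (hpot_loop : ∀ v, dmdpPi i v = v → pot v = 0)
    (hpot_step : ∀ v, dmdpPi i v ≠ v →
      pot v = dmdpWeight n v (dmdpPi i v) - val v + pot (dmdpPi i v)) :
    (2 ≤ i → val (true, i - 1) = (n : ℚ) * (n + 1) + ((i : ℚ) - 1)) ∧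
    (∀ k, 1 ≤ k → k ≤ n → val (false, k) = (n : ℚ) * (n + 1) + i) ∧
    (∀ k, 1 ≤ k → k ≤ n → k ≠ i - 1 → val (true, k) = (n : ℚ) * (n + 1) + i) ∧
    (2 ≤ i → pot (true, i - 1) = 0) ∧
    pot (true, i) = 0 ∧
    (∀ k, 1 ≤ k → k ≤ i - 2 → pot (true, k) =
      ((n : ℚ) + 1) ^ 2 - 2 * ((n : ℚ) * (n + 1) + i)) ∧
    (∀ k, 1 ≤ k → k ≤ n → pot (false, k) = -((n : ℚ) * (n + 1) + i)) ∧
    (∀ k, i < k → k ≤ n → pot (true, k) = -((n : ℚ) * (n + 1) + i)) := by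

  -- policy computations
  have hpi_i : dmdpPi i (true, i) = (true, i) := by
    simp only [dmdpPi]
    rw [if_neg (by omega : ¬ i ≤ i - 2)]
    simp
  have hpi_im1 : 2 ≤ i → dmdpPi i (true, i - 1) = (true, i - 1) := by
    intro h2
    simp only [dmdpPi]
    rw [if_neg (by omega : ¬ i - 1 ≤ i - 2)]
    simp
  have hpi_b : ∀ k, dmdpPi i (false, k) = (true, i) := fun k => rfl
  have hpi_low : ∀ k, 1 ≤ k → k ≤ i - 2 → dmdpPi i (true, k) = (false, k) := by
    intro k hk1 hk2
    simp only [dmdpPi]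
    rw [if_pos hk2]
  have hpi_high : ∀ k, i < k → dmdpPi i (true, k) = (true, i) := by
    intro k hk
    simp only [dmdpPi]
    rw [if_neg (by omega : ¬ k ≤ i - 2), if_neg (by omega : ¬ (k = i - 1 ∨ k = i))]
  -- value at t_i
  have hval_i : val (true, i) = (n : ℚ) * (n + 1) + i := by
    rw [hval_loop _ hpi_i]
    simp [dmdpWeight]
  have hpot_i : pot (true, i) = 0 := hpot_loop _ hpi_i
  have hval_b : ∀ k, val (false, k) = (n : ℚ) * (n + 1) + i := by
    intro k
    rw [hval_step (false, k), hpi_b, hval_i]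
  have hpot_b : ∀ k, pot (false, k) = -((n : ℚ) * (n + 1) + i) := by
    intro k
    rw [hpot_step (false, k) (by rw [hpi_b]; simp), hpi_b, hval_b, hpot_i]
    simp [dmdpWeight]
  refine ⟨?_, fun k _ _ => hval_b k, ?_, ?_, hpot_i, ?_, fun k _ _ => hpot_b k, ?_⟩
  · intro h2
    rw [hval_loop _ (hpi_im1 h2)]
    simp only [dmdpWeight, if_pos rfl]
    push_cast [Nat.cast_sub hi1]
    ring
  · intro k hk1 hkn hki
    rcases lt_trichotomy k i with h | h | h
    · have hk2 : k ≤ i - 2 := by omega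
      rw [hval_step (true, k), hpi_low k hk1 hk2, hval_b]
    · rw [h, hval_i]
    · rw [hval_step (true, k), hpi_high k h, hval_i]
  · intro h2
    exact hpot_loop _ (hpi_im1 h2)
  · intro k hk1 hk2
    have hne : dmdpPi i (true, k) ≠ (true, k) := by
      rw [hpi_low k hk1 hk2]; simp
    rw [hpot_step _ hne, hpi_low k hk1 hk2, hval_step (true, k),
      hpi_low k hk1 hk2, hval_b, hpot_b]
    simp [dmdpWeight]
    ring
  · intro k hk hkn
    have hne : dmdpPi i (true, k) ≠ (true, k) := by
      rw [hpi_high k hk]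
      simp [Prod.ext_iff]
      omega
    rw [hpot_step _ hne, hpi_high k hk, hval_step (true, k), hpi_high k hk,
      hval_i, hpot_i]
    have : dmdpWeight n (true, k) (true, i) = 0 := by
      simp only [dmdpWeight]
      rw [if_neg (by omega : ¬ k = i)]
    rw [this]; ring
end
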